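/- arXiv:2106.14629 — 11 statements merged into one kernel-verified Lean document; each statement's English description precedes it below -/
import Mathlib

section
/- Let ν, k, b₀, b₁, b₂ be real constants and set P(t) := b₀ + b₁t + b₂t². Assume P(t) > 0 for all t. Let q : ℝ → EuclideanSpace ℝ (Fin 3) be twice differentiable with r(t) := ‖q(t)‖ > 0, satisfying q''(t) = −ν·ω(t)·r(t)^(−(ν+2))·q(t) where ω(t) = k·P(t)^((ν−2)/2). Then the quantity J_ν(t) := P(t)·[ ‖q'(t)‖²/2 − k·P(t)^((ν−2)/2)/r(t)^ν ] − ((b₁ + 2b₂t)/2)·⟨q(t), q'(t)⟩ + (b₂/2)·r(t)² is constant in t. -/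
/-!
Writing `J = P E - (P'/2) ⟪q, q'⟫ + (P''/4) ‖q‖²` with `E` the energy, `J'` has no `P'''` term
because `P` is quadratic. The remaining terms cancel since the potential
`V = -k P^((ν-2)/2) ‖q‖^(-ν)` is homogeneous of degree `-ν` in `q`, so that `⟪q, q''⟫ = ν V`,
and its explicit time dependence satisfies `P ∂ₜV = ((ν-2)/2) P' V`.
-/

open scoped RealInnerProductSpace

theorem Real.rpow_neg_add_two {r : ℝ} (hr : 0 < r) (ν : ℝ) :
    r ^ (-(ν + 2)) = 1 / r ^ ν / r ^ 2 := by
  rw [Real.rpow_neg hr.le, Real.rpow_add hr, Real.rpow_two]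
  field_simp

theorem hasDerivAt_quadratic (b₀ b₁ b₂ t : ℝ) :
    HasDerivAt (fun s => b₀ + b₁ * s + b₂ * s ^ 2) (b₁ + 2 * b₂ * t) t := by
  refine ((((hasDerivAt_id t).const_mul b₁).const_add b₀).add
    ((hasDerivAt_pow 2 t).const_mul b₂)).congr_deriv ?_
  simp only [mul_one, Nat.cast_ofNat, Nat.add_one_sub_one, pow_one]
  ring

section

variable {E : Type*} [NormedAddCommGroup E] [InnerProductSpace ℝ E]

theorem HasDerivAt.norm_rpow {f : ℝ → E} {f' : E} {x : ℝ} (hf : HasDerivAt f f' x)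
    (h0 : f x ≠ 0) (p : ℝ) :
    HasDerivAt (fun y => ‖f y‖ ^ p) (p * ‖f x‖ ^ p * ⟪f x, f'⟫ / ‖f x‖ ^ 2) x := by
  have hpos : 0 < ‖f x‖ := norm_pos_iff.mpr h0
  have hsq : (fun y => ‖f y‖ ^ p) = fun y => (‖f y‖ ^ 2) ^ (p / 2) := by
    funext y
    rw [← Real.rpow_natCast, ← Real.rpow_mul (norm_nonneg _)]
    ring_nf
  rw [hsq]
  convert hf.norm_sq.rpow_const (p := p / 2) (Or.inl (by positivity)) using 1
  rw [Real.rpow_sub (by positivity), Real.rpow_one, ← Real.rpow_natCast,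
    ← Real.rpow_mul (norm_nonneg _)]
  field_simp
  ring_nf

theorem HasDerivAt.mul_rpow_div_norm_rpow {P : ℝ → ℝ} {q : ℝ → E} {P' : ℝ} {v : E} {t : ℝ}
    (hP : HasDerivAt P P' t) (hq : HasDerivAt q v t) (hPt : 0 < P t) (hq0 : q t ≠ 0)
    (k a ν : ℝ) :
    HasDerivAt (fun s => k * P s ^ a / ‖q s‖ ^ ν)
      (k * P t ^ a / ‖q t‖ ^ ν * (a * P' / P t - ν * ⟪q t, v⟫ / ‖q t‖ ^ 2)) t := by
  have hr : 0 < ‖q t‖ := norm_pos_iff.mpr hq0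
  refine (((hP.rpow_const (p := a) (Or.inl hPt.ne')).const_mul k).div (hq.norm_rpow hq0 ν)
    (by positivity)).congr_deriv ?_
  rw [Real.rpow_sub_one hPt.ne']
  field_simp

noncomputable def Jnu (ν k b₁ b₂ : ℝ) (P : ℝ → ℝ) (q q' : ℝ → E) (t : ℝ) : ℝ :=
  P t * (‖q' t‖ ^ 2 / 2 - k * P t ^ ((ν - 2) / 2) / ‖q t‖ ^ ν)
    - (b₁ + 2 * b₂ * t) / 2 * ⟪q t, q' t⟫ + b₂ / 2 * ‖q t‖ ^ 2

theorem hasDerivAt_Jnu {ν k b₁ b₂ t : ℝ} {P : ℝ → ℝ} {q q' q'' : ℝ → E}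
    (hP : HasDerivAt P (b₁ + 2 * b₂ * t) t) (hPt : 0 < P t)
    (hq : HasDerivAt q (q' t) t) (hq' : HasDerivAt q' (q'' t) t) (hq0 : q t ≠ 0)
    (heom : q'' t = (-(ν * (k * P t ^ ((ν - 2) / 2)) * ‖q t‖ ^ (-(ν + 2)))) • q t) :
    HasDerivAt (Jnu ν k b₁ b₂ P q q') 0 t := by
  have hr : 0 < ‖q t‖ := norm_pos_iff.mpr hq0
  have hacc : q'' t = (-(ν * (k * P t ^ ((ν - 2) / 2) / ‖q t‖ ^ ν) / ‖q t‖ ^ 2)) • q t := by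
    rw [heom, Real.rpow_neg_add_two hr]
    ring_nf
  have hlin : HasDerivAt (fun s => (b₁ + 2 * b₂ * s) / 2) b₂ t :=
    (((hasDerivAt_id t).const_mul (2 * b₂)).const_add b₁).div_const 2 |>.congr_deriv (by ring)
  refine (((hP.mul (hq'.norm_sq.div_const 2 |>.sub
    (hP.mul_rpow_div_norm_rpow hq hPt hq0 k ((ν - 2) / 2) ν))).sub
    (hlin.mul (hq.inner ℝ hq'))).add (hq.norm_sq.const_mul (b₂ / 2))).congr_deriv ?_
  simp only [Pi.sub_apply]
  rw [hacc, inner_smul_right, inner_smul_right, real_inner_self_eq_norm_sq (q t),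
    real_inner_self_eq_norm_sq (q' t), real_inner_comm (q' t)]
  field_simp
  ring

end

/-- For the time-dependent generalized Kepler potential with
`ω(t) = k (b₀ + b₁ t + b₂ t²)^((ν-2)/2)`, the quantity `J_ν` is a first integral. -/
theorem Jnu_first_integral (ν k b₀ b₁ b₂ : ℝ)
    (P : ℝ → ℝ) (hP : ∀ t, P t = b₀ + b₁ * t + b₂ * t ^ 2)
    (hPpos : ∀ t, 0 < P t)
    (q q' q'' : ℝ → EuclideanSpace ℝ (Fin 3))
    (hq : ∀ t, HasDerivAt q (q' t) t)
    (hq' : ∀ t, HasDerivAt q' (q'' t) t)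
    (hr : ∀ t, 0 < ‖q t‖)
    (heom : ∀ t, q'' t =
      (-(ν * (k * P t ^ ((ν - 2) / 2)) * ‖q t‖ ^ (-(ν + 2)))) • q t) :
    ∀ t₁ t₂,
      P t₁ * (‖q' t₁‖ ^ 2 / 2 - k * P t₁ ^ ((ν - 2) / 2) / ‖q t₁‖ ^ ν)
        - (b₁ + 2 * b₂ * t₁) / 2 * ⟪q t₁, q' t₁⟫ + b₂ / 2 * ‖q t₁‖ ^ 2
      = P t₂ * (‖q' t₂‖ ^ 2 / 2 - k * P t₂ ^ ((ν - 2) / 2) / ‖q t₂‖ ^ ν)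
        - (b₁ + 2 * b₂ * t₂) / 2 * ⟪q t₂, q' t₂⟫ + b₂ / 2 * ‖q t₂‖ ^ 2 := by
  obtain rfl : P = fun t => b₀ + b₁ * t + b₂ * t ^ 2 := funext hP
  have hJ (t : ℝ) : HasDerivAt (Jnu ν k b₁ b₂ _ q q') 0 t :=
    hasDerivAt_Jnu (hasDerivAt_quadratic b₀ b₁ b₂ t) (hPpos t) (hq t) (hq' t)
      (norm_pos_iff.mp (hr t)) (heom t)
  exact is_const_of_deriv_eq_zero (fun t => (hJ t).differentiableAt) (fun t => (hJ t).deriv)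
end

section
/- Let k, b₀, b₁ be real constants with k·b₁ ≠ 0, and assume b₀ + b₁t > 0 for all t in an open interval J. Let q : J → EuclideanSpace ℝ (Fin 3) be twice differentiable with r(t) := ‖q(t)‖ > 0 on J, satisfying the time-dependent Kepler equations q''(t) = −ω(t)·r(t)^(−3)·q(t) with ω(t) = k/(b₀ + b₁t). Then the quantity E₂(t) := (b₀ + b₁t)²·[ ‖q'(t)‖²/2 − k/(r(t)(b₀ + b₁t)) ] − b₁(b₀ + b₁t)·⟨q(t), q'(t)⟩ + (b₁²/2)·r(t)² is constant on J. -/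
/-!
Writing `P t = b₀ + b₁ t`, the quantity is `E₂ = ‖P q' - b₁ q‖² / 2 - k P / ‖q‖`. Since `P' = b₁`,
the vector `P q' - b₁ q` has derivative `P q'' = -(k / ‖q‖³) q`, because `P ω = k`; the resulting
derivative of the first term cancels exactly against that of `-k P / ‖q‖`.
-/

open scoped RealInnerProductSpace

variable {F : Type*} [NormedAddCommGroup F] [InnerProductSpace ℝ F]

theorem HasDerivAt.norm_of_ne_zero {f : ℝ → F} {f' : F} {x : ℝ} (hf : HasDerivAt f f' x)
    (h0 : f x ≠ 0) : HasDerivAt (‖f ·‖) (⟪f x, f'⟫ / ‖f x‖) x := by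
  have h := hf.norm_sq.sqrt (by positivity)
  simp only [Real.sqrt_sq (norm_nonneg _)] at h
  convert h using 1
  field_simp

noncomputable def keplerSecondIntegral (k b₀ b₁ : ℝ) (q q' : ℝ → F) (t : ℝ) : ℝ :=
  ‖(b₀ + b₁ * t) • q' t - b₁ • q t‖ ^ 2 / 2 - k * (b₀ + b₁ * t) / ‖q t‖

theorem keplerSecondIntegral_eq (k b₀ b₁ t : ℝ) (q q' : ℝ → F) :
    keplerSecondIntegral k b₀ b₁ q q' t =
      (b₀ + b₁ * t) ^ 2 * (‖q' t‖ ^ 2 / 2 - k / (‖q t‖ * (b₀ + b₁ * t)))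
        - b₁ * (b₀ + b₁ * t) * ⟪q t, q' t⟫ + b₁ ^ 2 / 2 * ‖q t‖ ^ 2 := by
  rw [keplerSecondIntegral, norm_sub_sq_real, norm_smul, norm_smul, real_inner_smul_left,
    real_inner_smul_right, real_inner_comm]
  simp only [Real.norm_eq_abs, mul_pow, sq_abs]
  by_cases hP : b₀ + b₁ * t = 0
  · simp [hP]; ring
  field_simp
  ring

theorem hasDerivAt_keplerSecondIntegral {k b₀ b₁ t : ℝ} {q q' q'' : ℝ → F}
    (hq : HasDerivAt q (q' t) t) (hq' : HasDerivAt q' (q'' t) t)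
    (hP : b₀ + b₁ * t ≠ 0) (h0 : q t ≠ 0)
    (heom : q'' t = (-(k / (b₀ + b₁ * t) * ‖q t‖ ^ (-3 : ℝ))) • q t) :
    HasDerivAt (keplerSecondIntegral k b₀ b₁ q q') 0 t := by
  have hlin : HasDerivAt (fun t => b₀ + b₁ * t) b₁ t := by
    simpa using ((hasDerivAt_id t).const_mul b₁).const_add b₀
  have hw : HasDerivAt (fun t => (b₀ + b₁ * t) • q' t - b₁ • q t)
      ((b₀ + b₁ * t) • q'' t) t :=
    ((hlin.smul hq').sub (hq.const_smul b₁)).congr_deriv (by simp)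
  have hr : ‖q t‖ ≠ 0 := norm_ne_zero_iff.mpr h0
  refine ((hw.norm_sq.div_const 2).sub
    ((hlin.const_mul k).div (hq.norm_of_ne_zero h0) hr)).congr_deriv ?_
  have hcube : ‖q t‖ ^ (-3 : ℝ) = (‖q t‖ ^ 3)⁻¹ := by
    rw [Real.rpow_neg (norm_nonneg _)]; norm_cast
  simp only [heom, hcube, inner_sub_left, real_inner_smul_left, real_inner_smul_right,
    real_inner_self_eq_norm_sq, real_inner_comm (q t) (q' t)]
  field_simp
  ring

theorem E2_first_integral_general (k b₀ b₁ : ℝ) (a b : ℝ)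
    (hpos : ∀ t ∈ Set.Ioo a b, 0 < b₀ + b₁ * t)
    (q q' q'' : ℝ → EuclideanSpace ℝ (Fin 3))
    (hq : ∀ t ∈ Set.Ioo a b, HasDerivAt q (q' t) t)
    (hq' : ∀ t ∈ Set.Ioo a b, HasDerivAt q' (q'' t) t)
    (hr : ∀ t ∈ Set.Ioo a b, 0 < ‖q t‖)
    (heom : ∀ t ∈ Set.Ioo a b,
      q'' t = (-(k / (b₀ + b₁ * t) * ‖q t‖ ^ (-3 : ℝ))) • q t) :
    ∀ t₁ ∈ Set.Ioo a b, ∀ t₂ ∈ Set.Ioo a b,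
      (b₀ + b₁ * t₁) ^ 2 * (‖q' t₁‖ ^ 2 / 2 - k / (‖q t₁‖ * (b₀ + b₁ * t₁)))
        - b₁ * (b₀ + b₁ * t₁) * ⟪q t₁, q' t₁⟫ + b₁ ^ 2 / 2 * ‖q t₁‖ ^ 2
      = (b₀ + b₁ * t₂) ^ 2 * (‖q' t₂‖ ^ 2 / 2 - k / (‖q t₂‖ * (b₀ + b₁ * t₂)))
        - b₁ * (b₀ + b₁ * t₂) * ⟪q t₂, q' t₂⟫ + b₁ ^ 2 / 2 * ‖q t₂‖ ^ 2 := by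
  intro t₁ ht₁ t₂ ht₂
  have hderiv : ∀ t ∈ Set.Ioo a b, HasDerivAt (keplerSecondIntegral k b₀ b₁ q q') 0 t :=
    fun t ht => hasDerivAt_keplerSecondIntegral (hq t ht) (hq' t ht) (hpos t ht).ne'
      (norm_pos_iff.mp (hr t ht)) (heom t ht)
  rw [← keplerSecondIntegral_eq, ← keplerSecondIntegral_eq]
  exact isOpen_Ioo.is_const_of_deriv_eq_zero isPreconnected_Ioo
    (fun t ht => (hderiv t ht).differentiableAt.differentiableWithinAt)
    (fun t ht => (hderiv t ht).deriv) ht₁ ht₂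

/-- For the time-dependent Kepler potential with `ω(t) = k/(b₀ + b₁ t)`,
the quantity `E₂` is a first integral on the open interval `J = (a, b)`. -/
theorem E2_first_integral (k b₀ b₁ : ℝ) (hk : k * b₁ ≠ 0) (a b : ℝ)
    (hpos : ∀ t ∈ Set.Ioo a b, 0 < b₀ + b₁ * t)
    (q q' q'' : ℝ → EuclideanSpace ℝ (Fin 3))
    (hq : ∀ t ∈ Set.Ioo a b, HasDerivAt q (q' t) t)
    (hq' : ∀ t ∈ Set.Ioo a b, HasDerivAt q' (q'' t) t)
    (hr : ∀ t ∈ Set.Ioo a b, 0 < ‖q t‖)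
    (heom : ∀ t ∈ Set.Ioo a b,
      q'' t = (-(k / (b₀ + b₁ * t) * ‖q t‖ ^ (-3 : ℝ))) • q t) :
    ∀ t₁ ∈ Set.Ioo a b, ∀ t₂ ∈ Set.Ioo a b,
      (b₀ + b₁ * t₁) ^ 2 * (‖q' t₁‖ ^ 2 / 2 - k / (‖q t₁‖ * (b₀ + b₁ * t₁)))
        - b₁ * (b₀ + b₁ * t₁) * ⟪q t₁, q' t₁⟫ + b₁ ^ 2 / 2 * ‖q t₁‖ ^ 2
      = (b₀ + b₁ * t₂) ^ 2 * (‖q' t₂‖ ^ 2 / 2 - k / (‖q t₂‖ * (b₀ + b₁ * t₂)))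
        - b₁ * (b₀ + b₁ * t₂) * ⟪q t₂, q' t₂⟫ + b₁ ^ 2 / 2 * ‖q t₂‖ ^ 2 :=
  E2_first_integral_general k b₀ b₁ a b hpos q q' q'' hq hq' hr heom
end

section
/- Let a : ℝ → ℝ be three times differentiable with a(t) ≠ 0 for all t, let c₀ be a real constant, and define ω(t) := a''(t)/(4a(t)) − (1/8)(a'(t)/a(t))² − c₀/(4a(t)²). Let q : ℝ → EuclideanSpace ℝ (Fin 3) be twice differentiable satisfying the 3d time-dependent oscillator equation q''(t) = 2ω(t)·q(t). Then for every pair of indices i, j the quantity Λ_{ij}(t) := a(t)·( q_i'(t)q_j'(t) − 2ω(t)q_i(t)q_j(t) ) − a'(t)·(1/2)(q_i(t)q_j'(t) + q_j(t)q_i'(t)) + (a''(t)/2)·q_i(t)q_j(t) is constant in t. -/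
/-!
Along any two solutions `x, y` of `x'' = 2ωx`, the quadratic form
`Λ = a (x'y' − 2ωxy) − a' (xy' + yx')/2 + (a''/2) xy` has derivative
`(a'''/2 − 2aω' − 4a'ω) xy`, whatever `a` and `ω` are. For the given `ω` the identity
`4a²ω = aa'' − a'²/2 − c₀` differentiates to `a a''' = a (8a'ω + 4aω')`, so this coefficient
vanishes when `a ≠ 0`. Components of a solution of the vector equation solve the scalar one.
-/

theorem HasDerivAt.euclideanSpace_apply {ι : Type*} [Fintype ι] {f : ℝ → EuclideanSpace ℝ ι}
    {f' : EuclideanSpace ℝ ι} {t : ℝ} (h : HasDerivAt f f' t) (i : ι) :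
    HasDerivAt (fun s => f s i) (f' i) t :=
  (EuclideanSpace.proj (𝕜 := ℝ) i).hasFDerivAt.comp_hasDerivAt t h

/-- `Λ_{ij}` at a time `t` is this with `x = q_i, x' = q_i', y = q_j, y' = q_j'`. -/
noncomputable def oscillatorInvariant (a a' a'' ω x x' y y' : ℝ) : ℝ :=
  a * (x' * y' - 2 * ω * x * y) - a' * ((1 / 2) * (x * y' + y * x')) + (a'' / 2) * (x * y)

theorem hasDerivAt_oscillatorInvariant {a a' a'' a''' ω x x' y y' : ℝ → ℝ} {ω' t : ℝ}
    (ha : HasDerivAt a (a' t) t) (ha' : HasDerivAt a' (a'' t) t)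
    (ha'' : HasDerivAt a'' (a''' t) t) (hω : HasDerivAt ω ω' t)
    (hx : HasDerivAt x (x' t) t) (hx' : HasDerivAt x' (2 * ω t * x t) t)
    (hy : HasDerivAt y (y' t) t) (hy' : HasDerivAt y' (2 * ω t * y t) t) :
    HasDerivAt
      (fun s => oscillatorInvariant (a s) (a' s) (a'' s) (ω s) (x s) (x' s) (y s) (y' s))
      ((a''' t / 2 - 2 * a t * ω' - 4 * a' t * ω t) * x t * y t) t := by
  refine (((ha.mul ((hx'.mul hy').sub (((hω.const_mul 2).mul hx).mul hy))).sub
    (ha'.mul (((hx.mul hy').add (hy.mul hx')).const_mul (1 / 2 : ℝ)))).add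
    ((ha''.div_const 2).mul (hx.mul hy))).congr_deriv ?_
  simp only [Pi.mul_apply, Pi.sub_apply, Pi.add_apply]
  ring

theorem differentiableAt_of_eq_frequency {a a' a'' ω : ℝ → ℝ} {c₀ t : ℝ}
    (ha : DifferentiableAt ℝ a t) (ha' : DifferentiableAt ℝ a' t)
    (ha'' : DifferentiableAt ℝ a'' t) (hane : a t ≠ 0)
    (hω : ∀ s, ω s = a'' s / (4 * a s) - (1 / 8) * (a' s / a s) ^ 2 - c₀ / (4 * a s ^ 2)) :
    DifferentiableAt ℝ ω t := by
  rw [funext hω]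
  fun_prop (disch := positivity)

theorem third_deriv_eq_of_four_mul_sq_mul_eq {a a' a'' a''' ω : ℝ → ℝ} {c₀ ω' t : ℝ}
    (ha : HasDerivAt a (a' t) t) (ha' : HasDerivAt a' (a'' t) t)
    (ha'' : HasDerivAt a'' (a''' t) t) (hω' : HasDerivAt ω ω' t) (hane : a t ≠ 0)
    (hω : ∀ s, 4 * a s ^ 2 * ω s = a s * a'' s - a' s ^ 2 / 2 - c₀) :
    a''' t = 8 * a' t * ω t + 4 * a t * ω' := by
  have hlhs : HasDerivAt (fun s => 4 * a s ^ 2 * ω s)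
      (4 * (2 * a t * a' t) * ω t + 4 * a t ^ 2 * ω') t := by
    simpa using ((ha.fun_pow 2).const_mul 4).fun_mul hω'
  have hrhs : HasDerivAt (fun s => a s * a'' s - a' s ^ 2 / 2 - c₀)
      (a' t * a'' t + a t * a''' t - 2 * a' t * a'' t / 2) t := by
    simpa using ((ha.fun_mul ha'').fun_sub ((ha'.fun_pow 2).div_const 2)).sub_const c₀
  rw [funext hω] at hlhs
  have := hrhs.unique hlhs
  apply mul_left_cancel₀ hane
  linear_combination this

/-- For the 3d time-dependent oscillator `q'' = 2ω(t)q` with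
`ω = a''/(4a) − (1/8)(a'/a)² − c₀/(4a²)`, the quantities `Λ_{ij}` are first integrals. -/
theorem Lambda_ij_first_integral (a a' a'' a''' : ℝ → ℝ)
    (ha : ∀ t, HasDerivAt a (a' t) t)
    (ha' : ∀ t, HasDerivAt a' (a'' t) t)
    (ha'' : ∀ t, HasDerivAt a'' (a''' t) t)
    (hane : ∀ t, a t ≠ 0) (c₀ : ℝ)
    (ω : ℝ → ℝ)
    (hω : ∀ t, ω t = a'' t / (4 * a t) - (1 / 8) * (a' t / a t) ^ 2
      - c₀ / (4 * (a t) ^ 2))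
    (q q' q'' : ℝ → EuclideanSpace ℝ (Fin 3))
    (hq : ∀ t, HasDerivAt q (q' t) t)
    (hq' : ∀ t, HasDerivAt q' (q'' t) t)
    (heom : ∀ t, q'' t = (2 * ω t) • q t) :
    ∀ (i j : Fin 3) (t₁ t₂ : ℝ),
      a t₁ * (q' t₁ i * q' t₁ j - 2 * ω t₁ * q t₁ i * q t₁ j)
        - a' t₁ * ((1 / 2) * (q t₁ i * q' t₁ j + q t₁ j * q' t₁ i))
        + (a'' t₁ / 2) * (q t₁ i * q t₁ j)
      = a t₂ * (q' t₂ i * q' t₂ j - 2 * ω t₂ * q t₂ i * q t₂ j)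
        - a' t₂ * ((1 / 2) * (q t₂ i * q' t₂ j + q t₂ j * q' t₂ i))
        + (a'' t₂ / 2) * (q t₂ i * q t₂ j) := by
  intro i j
  have hωd t : HasDerivAt ω (deriv ω t) t :=
    (differentiableAt_of_eq_frequency (ha t).differentiableAt (ha' t).differentiableAt
      (ha'' t).differentiableAt (hane t) hω).hasDerivAt
  have hω_mul s : 4 * a s ^ 2 * ω s = a s * a'' s - a' s ^ 2 / 2 - c₀ := by
    rw [hω s]
    field_simp [hane s]
    ring
  have hcomp' k t : HasDerivAt (fun s => q' s k) (2 * ω t * q t k) t := by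
    simpa [heom t] using (hq' t).euclideanSpace_apply k
  have hΛ t : HasDerivAt (fun s => oscillatorInvariant (a s) (a' s) (a'' s) (ω s)
      (q s i) (q' s i) (q s j) (q' s j)) 0 t := by
    refine (hasDerivAt_oscillatorInvariant (x := fun s => q s i) (y := fun s => q s j)
      (ha t) (ha' t) (ha'' t) (hωd t) ((hq t).euclideanSpace_apply i) (hcomp' i t)
      ((hq t).euclideanSpace_apply j) (hcomp' j t)).congr_deriv ?_
    rw [third_deriv_eq_of_four_mul_sq_mul_eq (ha t) (ha' t) (ha'' t) (hωd t) (hane t) hω_mul]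
    ring
  exact is_const_of_deriv_eq_zero (fun t => (hΛ t).differentiableAt) (fun t => (hΛ t).deriv)
end

section
/- Let ψ : ℝ → ℝ and let c₀ be a real constant. Let ρ, x : ℝ → ℝ be twice differentiable with ρ(t) ≠ 0 for all t, satisfying the auxiliary equation ρ''(t) + ψ(t)²·ρ(t) − c₀/(2ρ(t)³) = 0 and the time-dependent oscillator equation x''(t) + ψ(t)²·x(t) = 0. Then the Lewis invariant I(t) := (1/2)·( x(t)ρ'(t) − ρ(t)x'(t) )² + (c₀/4)·( x(t)/ρ(t) )² is constant in t. -/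
/-!
With the Wronskian-like quantity `W = x ρ' - ρ x'`, the two equations give
`W' = x ρ'' - ρ x'' = c₀ x / (2 ρ³)`, while `(x / ρ)' = -W / ρ²`. Hence
`I' = W W' - (c₀ / 2) (x / ρ) W / ρ² = W (W' - c₀ x / (2 ρ³)) = 0`, so `I` is constant.
-/

noncomputable def lewisInvariant (c₀ : ℝ) (ρ ρ' x x' : ℝ → ℝ) (t : ℝ) : ℝ :=
  (1 / 2) * (x t * ρ' t - ρ t * x' t) ^ 2 + (c₀ / 4) * (x t / ρ t) ^ 2

section

variable {c₀ t : ℝ} {ρ ρ' ρ'' x x' x'' : ℝ → ℝ}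

theorem hasDerivAt_wronskian (hρ : HasDerivAt ρ (ρ' t) t) (hρ' : HasDerivAt ρ' (ρ'' t) t)
    (hx : HasDerivAt x (x' t) t) (hx' : HasDerivAt x' (x'' t) t) :
    HasDerivAt (fun s => x s * ρ' s - ρ s * x' s) (x t * ρ'' t - ρ t * x'' t) t :=
  ((hx.mul hρ').sub (hρ.mul hx')).congr_deriv (by ring)

theorem hasDerivAt_lewisInvariant (hρ : HasDerivAt ρ (ρ' t) t) (hρ' : HasDerivAt ρ' (ρ'' t) t)
    (hx : HasDerivAt x (x' t) t) (hx' : HasDerivAt x' (x'' t) t) (hρne : ρ t ≠ 0) :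
    HasDerivAt (lewisInvariant c₀ ρ ρ' x x')
      ((x t * ρ' t - ρ t * x' t) *
        (x t * ρ'' t - ρ t * x'' t - c₀ * x t / (2 * ρ t ^ 3))) t := by
  have hW := hasDerivAt_wronskian hρ hρ' hx hx'
  have hq : HasDerivAt (fun s => x s / ρ s) ((x' t * ρ t - x t * ρ' t) / ρ t ^ 2) t :=
    hx.div hρ hρne
  refine (((hW.pow 2).const_mul (1 / 2)).add ((hq.pow 2).const_mul (c₀ / 4))).congr_deriv ?_
  simp only [Nat.cast_ofNat, Nat.add_one_sub_one, pow_one]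
  field_simp
  ring

theorem wronskian_deriv_eq_of_ermakov_pinney {Ω : ℝ}
    (haux : ρ'' t + Ω * ρ t - c₀ / (2 * ρ t ^ 3) = 0) (hosc : x'' t + Ω * x t = 0) :
    x t * ρ'' t - ρ t * x'' t = c₀ * x t / (2 * ρ t ^ 3) := by
  linear_combination x t * haux - ρ t * hosc

end

/-- The Lewis invariant of the 1d time-dependent harmonic oscillator together with
the Ermakov–Pinney auxiliary equation is a first integral. -/
theorem lewis_invariant (ψ : ℝ → ℝ) (c₀ : ℝ)
    (ρ ρ' ρ'' x x' x'' : ℝ → ℝ)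
    (hρ : ∀ t, HasDerivAt ρ (ρ' t) t)
    (hρ' : ∀ t, HasDerivAt ρ' (ρ'' t) t)
    (hx : ∀ t, HasDerivAt x (x' t) t)
    (hx' : ∀ t, HasDerivAt x' (x'' t) t)
    (hρne : ∀ t, ρ t ≠ 0)
    (haux : ∀ t, ρ'' t + (ψ t) ^ 2 * ρ t - c₀ / (2 * (ρ t) ^ 3) = 0)
    (hosc : ∀ t, x'' t + (ψ t) ^ 2 * x t = 0) :
    ∀ t₁ t₂,
      (1 / 2) * (x t₁ * ρ' t₁ - ρ t₁ * x' t₁) ^ 2 + (c₀ / 4) * (x t₁ / ρ t₁) ^ 2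
      = (1 / 2) * (x t₂ * ρ' t₂ - ρ t₂ * x' t₂) ^ 2 + (c₀ / 4) * (x t₂ / ρ t₂) ^ 2 := by
  have hI : ∀ t, HasDerivAt (lewisInvariant c₀ ρ ρ' x x') 0 t := fun t => by
    simpa [wronskian_deriv_eq_of_ermakov_pinney (haux t) (hosc t)] using
      hasDerivAt_lewisInvariant (c₀ := c₀) (hρ t) (hρ' t) (hx t) (hx' t) (hρne t)
  exact is_const_of_deriv_eq_zero (fun t => (hI t).differentiableAt) (fun t => (hI t).deriv)
end

section
/- Let g : ℝ → ℝ be twice differentiable with g(t) ≠ 0 for all t, and define ω(t) := g''(t)/(2g(t)). Let q : ℝ → EuclideanSpace ℝ (Fin 3) be twice differentiable satisfying the 3d time-dependent oscillator equation q''(t) = 2ω(t)·q(t). Then the vector I₄(t) := g(t)·q'(t) − g'(t)·q(t) is constant in t. -/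
/-! The time derivative of the Wronskian-type vector `g q' − g' q` is `g q'' − g'' q`, and the
equation of motion with `ω = g''/(2g)` says exactly that `g q'' = g'' q`. -/

section Wronskian

variable {𝕜 E : Type*} [RCLike 𝕜] [NormedAddCommGroup E] [NormedSpace 𝕜 E]
  {g g' g'' : 𝕜 → 𝕜} {q q' q'' : 𝕜 → E}

theorem hasDerivAt_smul_sub_smul {t : 𝕜} (hg : HasDerivAt g (g' t) t)
    (hg' : HasDerivAt g' (g'' t) t) (hq : HasDerivAt q (q' t) t)
    (hq' : HasDerivAt q' (q'' t) t) :
    HasDerivAt (fun s => g s • q' s - g' s • q s) (g t • q'' t - g'' t • q t) t :=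
  ((hg.smul hq').sub (hg'.smul hq)).congr_deriv (by abel)

theorem smul_sub_smul_eq_of_smul_eq_smul (hg : ∀ t, HasDerivAt g (g' t) t)
    (hg' : ∀ t, HasDerivAt g' (g'' t) t) (hq : ∀ t, HasDerivAt q (q' t) t)
    (hq' : ∀ t, HasDerivAt q' (q'' t) t) (h : ∀ t, g t • q'' t = g'' t • q t) (t₁ t₂ : 𝕜) :
    g t₁ • q' t₁ - g' t₁ • q t₁ = g t₂ • q' t₂ - g' t₂ • q t₂ := by
  have hderiv t : HasDerivAt (fun s => g s • q' s - g' s • q s) 0 t := by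
    simpa [h t] using hasDerivAt_smul_sub_smul (hg t) (hg' t) (hq t) (hq' t)
  exact is_const_of_deriv_eq_zero (fun t => (hderiv t).differentiableAt)
    (fun t => (hderiv t).deriv) t₁ t₂

end Wronskian

/-- For the 3d time-dependent oscillator `q'' = 2ω(t)q` with `ω = g''/(2g)`,
the vector `I₄ = g q' − g' q` is a first integral. -/
theorem I4_first_integral (g g' g'' : ℝ → ℝ)
    (hg : ∀ t, HasDerivAt g (g' t) t)
    (hg' : ∀ t, HasDerivAt g' (g'' t) t)
    (hgne : ∀ t, g t ≠ 0)
    (ω : ℝ → ℝ) (hω : ∀ t, ω t = g'' t / (2 * g t))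
    (q q' q'' : ℝ → EuclideanSpace ℝ (Fin 3))
    (hq : ∀ t, HasDerivAt q (q' t) t)
    (hq' : ∀ t, HasDerivAt q' (q'' t) t)
    (heom : ∀ t, q'' t = (2 * ω t) • q t) :
    ∀ t₁ t₂, g t₁ • q' t₁ - g' t₁ • q t₁ = g t₂ • q' t₂ - g' t₂ • q t₂ := by
  refine smul_sub_smul_eq_of_smul_eq_smul hg hg' hq hq' fun t => ?_
  have hcoeff : g t * (2 * ω t) = g'' t := by
    rw [hω t]
    field_simp [hgne t]
  rw [heom t, smul_smul, hcoeff]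
end

section
/- Let f : ℝ → ℝ be twice differentiable with f(t) > 0 for all t, let c₀ > 0 be a real constant, and let θ : ℝ → ℝ be differentiable with θ'(t) = √(c₀/2)/f(t) for all t. Define ω(t) := f''(t)/(4f(t)) − (1/8)(f'(t)/f(t))² − c₀/(4f(t)²). Then both g₁(t) := √(f(t))·cos(θ(t)) and g₂(t) := √(f(t))·sin(θ(t)) satisfy g''(t) = 2ω(t)·g(t) for all t. -/
/-!
Write `g = r cos θ` with `r = √f`. Differentiating twice gives
`g'' = (r'' - r θ'²) cos θ - (2 r' θ' + r θ'') sin θ`.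
The choice `θ' = k / r²` makes `r² θ'` constant, so the `sin θ` coefficient `(r² θ')' / r`
vanishes, and `r''/r - θ'² = f''/(2f) - (f'/f)²/4 - k²/f²`, which is `2ω` for `k² = c₀/2`.
The sine solution is the cosine one for the phase `θ - π/2`.
-/

open Real

theorem deriv_deriv_mul_cos {r r' r'' θ θ' θ'' : ℝ → ℝ}
    (hr : ∀ t, HasDerivAt r (r' t) t) (hr' : ∀ t, HasDerivAt r' (r'' t) t)
    (hθ : ∀ t, HasDerivAt θ (θ' t) t) (hθ' : ∀ t, HasDerivAt θ' (θ'' t) t) (t : ℝ) :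
    deriv (deriv fun s => r s * cos (θ s)) t
      = (r'' t - r t * θ' t ^ 2) * cos (θ t) - (2 * r' t * θ' t + r t * θ'' t) * sin (θ t) := by
  have hd : deriv (fun s => r s * cos (θ s))
      = fun u => r' u * cos (θ u) + r u * (-sin (θ u) * θ' u) :=
    funext fun u => ((hr u).mul (hθ u).cos).deriv
  rw [hd]
  exact (((hr' t).mul (hθ t).cos).add ((hr t).mul ((hθ t).sin.neg.mul (hθ' t)))).deriv.trans
    (by simp only [Pi.mul_apply, Pi.neg_apply]; ring)

theorem hasDerivAt_deriv_sqrt_comp {f f' f'' : ℝ → ℝ}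
    (hf : ∀ t, HasDerivAt f (f' t) t) (hf' : ∀ t, HasDerivAt f' (f'' t) t)
    (hfpos : ∀ t, 0 < f t) (t : ℝ) :
    HasDerivAt (fun s => f' s / (2 * √(f s)))
      ((2 * f t * f'' t - f' t ^ 2) / (4 * f t * √(f t))) t := by
  have hfS : f t = √(f t) ^ 2 := (sq_sqrt (hfpos t).le).symm
  have hS : 0 < √(f t) := sqrt_pos.mpr (hfpos t)
  refine ((hf' t).div (((hf t).sqrt (hfpos t).ne').const_mul 2) (by positivity)).congr_deriv ?_
  set S := √(f t)
  rw [hfS]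
  field_simp
  ring

theorem deriv_deriv_sqrt_mul_cos {f f' f'' θ : ℝ → ℝ} {k : ℝ}
    (hf : ∀ t, HasDerivAt f (f' t) t) (hf' : ∀ t, HasDerivAt f' (f'' t) t)
    (hfpos : ∀ t, 0 < f t) (hθ : ∀ t, HasDerivAt θ (k / f t) t) (t : ℝ) :
    deriv (deriv fun s => √(f s) * cos (θ s)) t
      = (f'' t / (2 * f t) - (f' t / f t) ^ 2 / 4 - k ^ 2 / f t ^ 2) * (√(f t) * cos (θ t)) := by
  have hθ' (u : ℝ) : HasDerivAt (fun s => k / f s) (-(k * f' u) / f u ^ 2) u :=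
    ((hasDerivAt_const u k).div (hf u) (hfpos u).ne').congr_deriv (by ring)
  rw [deriv_deriv_mul_cos (fun u => (hf u).sqrt (hfpos u).ne')
    (hasDerivAt_deriv_sqrt_comp hf hf' hfpos) hθ hθ']
  have hfS : f t = √(f t) ^ 2 := (sq_sqrt (hfpos t).le).symm
  have hS : 0 < √(f t) := sqrt_pos.mpr (hfpos t)
  set S := √(f t)
  have angular_term_eq_zero :
      2 * (f' t / (2 * S)) * (k / f t) + S * (-(k * f' t) / f t ^ 2) = 0 := by
    rw [hfS]
    field_simp
    ring
  rw [angular_term_eq_zero, hfS]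
  field_simp
  ring

/-- With `θ' = √(c₀/2)/f` and `ω = f''/(4f) − (1/8)(f'/f)² − c₀/(4f²)`, both
`√f·cos θ` and `√f·sin θ` satisfy the oscillator equation `g'' = 2ω g`. -/
theorem sqrtf_trig_solve_oscillator (f f' f'' : ℝ → ℝ)
    (hf : ∀ t, HasDerivAt f (f' t) t)
    (hf' : ∀ t, HasDerivAt f' (f'' t) t)
    (hfpos : ∀ t, 0 < f t)
    (c₀ : ℝ) (hc₀ : 0 < c₀)
    (θ : ℝ → ℝ) (hθ : ∀ t, HasDerivAt θ (Real.sqrt (c₀ / 2) / f t) t)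
    (ω : ℝ → ℝ)
    (hω : ∀ t, ω t = f'' t / (4 * f t) - (1 / 8) * (f' t / f t) ^ 2
      - c₀ / (4 * (f t) ^ 2)) :
    (∀ t, deriv (deriv fun s => Real.sqrt (f s) * Real.cos (θ s)) t
        = 2 * ω t * (Real.sqrt (f t) * Real.cos (θ t))) ∧
    (∀ t, deriv (deriv fun s => Real.sqrt (f s) * Real.sin (θ s)) t
        = 2 * ω t * (Real.sqrt (f t) * Real.sin (θ t))) := by
  have hk : √(c₀ / 2) ^ 2 = c₀ / 2 := sq_sqrt (by positivity)
  have hω' (t : ℝ) :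
      f'' t / (2 * f t) - (f' t / f t) ^ 2 / 4 - √(c₀ / 2) ^ 2 / f t ^ 2 = 2 * ω t := by
    rw [hk, hω]
    ring
  have cos_sol (φ : ℝ → ℝ) (hφ : ∀ t, HasDerivAt φ (√(c₀ / 2) / f t) t) (t : ℝ) :
      deriv (deriv fun s => √(f s) * cos (φ s)) t = 2 * ω t * (√(f t) * cos (φ t)) := by
    rw [deriv_deriv_sqrt_mul_cos hf hf' hfpos hφ, hω']
  refine ⟨cos_sol θ hθ, fun t => ?_⟩
  simpa only [cos_sub_pi_div_two] using
    cos_sol (fun s => θ s - π / 2) (fun u => (hθ u).sub_const _) t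
end

section
/- Let f : ℝ → ℝ be twice differentiable with f(t) > 0 for all t, let c₀ > 0 be a real constant, and let θ : ℝ → ℝ be differentiable with θ'(t) = √(c₀/2)/f(t). Define ω(t) := f''(t)/(4f(t)) − (1/8)(f'(t)/f(t))² − c₀/(4f(t)²). Let q : ℝ → EuclideanSpace ℝ (Fin 3) be twice differentiable satisfying q''(t) = 2ω(t)·q(t). Then for each index i the quantities I₄₁ᵢ(t) := √(c₀/2)·f(t)^(−1/2)·q_i(t)·sin(θ(t)) + ( f(t)^(1/2)·q_i'(t) − (f'(t)/2)·f(t)^(−1/2)·q_i(t) )·cos(θ(t)) and I₄₂ᵢ(t) := −√(c₀/2)·f(t)^(−1/2)·q_i(t)·cos(θ(t)) + ( f(t)^(1/2)·q_i'(t) − (f'(t)/2)·f(t)^(−1/2)·q_i(t) )·sin(θ(t)) are constant in t. -/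
/-! For a coordinate `x` put `y = f^(-1/2) x`, `A = s y` and `B = f y' = f^(1/2) x' − (f'/2) f^(-1/2) x`,
where `s = √(c₀/2)`. Since `θ' = s/f`, `(A, B)` is `s` times `(y, dy/dθ)`, and the choice of `ω`
makes `x'' = 2ωx` equivalent to `d²y/dθ² = −y`; in the original time this reads `A' = θ' B`,
`B' = −θ' A`. The pair thus rotates with angle `−θ`, so `A sin θ + B cos θ` and
`−A cos θ + B sin θ` are constant. -/

open Real

theorem rotating_pair_invariants {A B θ θ' : ℝ → ℝ}
    (hA : ∀ t, HasDerivAt A (θ' t * B t) t) (hB : ∀ t, HasDerivAt B (-(θ' t * A t)) t)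
    (hθ : ∀ t, HasDerivAt θ (θ' t) t) (t₁ t₂ : ℝ) :
    A t₁ * sin (θ t₁) + B t₁ * cos (θ t₁) = A t₂ * sin (θ t₂) + B t₂ * cos (θ t₂) ∧
      -A t₁ * cos (θ t₁) + B t₁ * sin (θ t₁) = -A t₂ * cos (θ t₂) + B t₂ * sin (θ t₂) := by
  have hsin t := (hθ t).sin
  have hcos t := (hθ t).cos
  have h₁ : ∀ t, HasDerivAt (fun t => A t * sin (θ t) + B t * cos (θ t)) 0 t := fun t =>
    (((hA t).mul (hsin t)).add ((hB t).mul (hcos t))).congr_deriv (by ring)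
  have h₂ : ∀ t, HasDerivAt (fun t => -A t * cos (θ t) + B t * sin (θ t)) 0 t := fun t =>
    (((hA t).neg.mul (hcos t)).add ((hB t).mul (hsin t))).congr_deriv
      (by simp only [Pi.neg_apply]; ring)
  exact ⟨is_const_of_deriv_eq_zero (fun t => (h₁ t).differentiableAt) (fun t => (h₁ t).deriv) _ _,
    is_const_of_deriv_eq_zero (fun t => (h₂ t).differentiableAt) (fun t => (h₂ t).deriv) _ _⟩

section LiouvilleTransform

variable {f f' x x' : ℝ → ℝ}

theorem rpow_half_eq_mul_rpow_neg_half {a : ℝ} (ha : 0 < a) :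
    a ^ ((1 : ℝ) / 2) = a * a ^ (-(1 : ℝ) / 2) := by
  rw [show (1 : ℝ) / 2 = 1 + -(1 : ℝ) / 2 by ring, rpow_add ha, rpow_one]

theorem hasDerivAt_rpow_neg_half {t : ℝ} (hf : HasDerivAt f (f' t) t) (hft : 0 < f t) :
    HasDerivAt (fun t => f t ^ (-(1 : ℝ) / 2)) (-(f' t / (2 * f t)) * f t ^ (-(1 : ℝ) / 2)) t := by
  refine (hf.rpow_const (p := -(1 : ℝ) / 2) (Or.inl hft.ne')).congr_deriv ?_
  rw [show -(1 : ℝ) / 2 - 1 = -(1 : ℝ) / 2 + -1 by ring, rpow_add hft, rpow_neg_one]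
  field_simp

theorem hasDerivAt_rpow_half {t : ℝ} (hf : HasDerivAt f (f' t) t) (hft : 0 < f t) :
    HasDerivAt (fun t => f t ^ ((1 : ℝ) / 2)) (f' t / 2 * f t ^ (-(1 : ℝ) / 2)) t := by
  refine (hf.rpow_const (p := (1 : ℝ) / 2) (Or.inl hft.ne')).congr_deriv ?_
  rw [show (1 : ℝ) / 2 - 1 = -(1 : ℝ) / 2 by ring]
  ring

theorem hasDerivAt_liouville_position (s : ℝ) (hf : ∀ t, HasDerivAt f (f' t) t)
    (hfpos : ∀ t, 0 < f t) (hx : ∀ t, HasDerivAt x (x' t) t) (t : ℝ) :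
    HasDerivAt (fun t => s * f t ^ (-(1 : ℝ) / 2) * x t)
      (s / f t * (f t ^ ((1 : ℝ) / 2) * x' t - f' t / 2 * f t ^ (-(1 : ℝ) / 2) * x t)) t := by
  refine (((hasDerivAt_rpow_neg_half (hf t) (hfpos t)).const_mul s).mul (hx t)).congr_deriv ?_
  have := (hfpos t).ne'
  rw [rpow_half_eq_mul_rpow_neg_half (hfpos t)]
  field_simp
  ring

theorem hasDerivAt_liouville_momentum {f'' ω x'' : ℝ → ℝ} (c₀ : ℝ)
    (hf : ∀ t, HasDerivAt f (f' t) t) (hf' : ∀ t, HasDerivAt f' (f'' t) t) (hfpos : ∀ t, 0 < f t)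
    (hω : ∀ t, ω t = f'' t / (4 * f t) - (1 / 8) * (f' t / f t) ^ 2 - c₀ / (4 * (f t) ^ 2))
    (hx : ∀ t, HasDerivAt x (x' t) t) (hx' : ∀ t, HasDerivAt x' (x'' t) t)
    (heom : ∀ t, x'' t = 2 * ω t * x t) (t : ℝ) :
    HasDerivAt (fun t => f t ^ ((1 : ℝ) / 2) * x' t - f' t / 2 * f t ^ (-(1 : ℝ) / 2) * x t)
      (-(c₀ / (2 * f t) * f t ^ (-(1 : ℝ) / 2) * x t)) t := by
  refine (((hasDerivAt_rpow_half (hf t) (hfpos t)).mul (hx' t)).sub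
    ((((hf' t).div_const 2).mul (hasDerivAt_rpow_neg_half (hf t) (hfpos t))).mul
      (hx t))).congr_deriv ?_
  simp only [Pi.mul_apply]
  have := (hfpos t).ne'
  rw [heom, hω, rpow_half_eq_mul_rpow_neg_half (hfpos t)]
  field_simp
  ring

end LiouvilleTransform

theorem hasDerivAt_euclideanSpace_apply {n : ℕ} {q q' : ℝ → EuclideanSpace ℝ (Fin n)} {t : ℝ}
    (hq : HasDerivAt q (q' t) t) (i : Fin n) : HasDerivAt (fun t => q t i) (q' t i) t :=
  (EuclideanSpace.proj (𝕜 := ℝ) i).hasFDerivAt.comp_hasDerivAt t hq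

/-- For the 3d time-dependent oscillator with frequency
`ω = f''/(4f) − (1/8)(f'/f)² − c₀/(4f²)` and `θ' = √(c₀/2)/f`, the linear
quantities `I₄₁ᵢ` and `I₄₂ᵢ` are first integrals. -/
theorem I41_I42_first_integrals (f f' f'' : ℝ → ℝ)
    (hf : ∀ t, HasDerivAt f (f' t) t)
    (hf' : ∀ t, HasDerivAt f' (f'' t) t)
    (hfpos : ∀ t, 0 < f t)
    (c₀ : ℝ) (hc₀ : 0 < c₀)
    (θ : ℝ → ℝ) (hθ : ∀ t, HasDerivAt θ (Real.sqrt (c₀ / 2) / f t) t)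
    (ω : ℝ → ℝ)
    (hω : ∀ t, ω t = f'' t / (4 * f t) - (1 / 8) * (f' t / f t) ^ 2
      - c₀ / (4 * (f t) ^ 2))
    (q q' q'' : ℝ → EuclideanSpace ℝ (Fin 3))
    (hq : ∀ t, HasDerivAt q (q' t) t)
    (hq' : ∀ t, HasDerivAt q' (q'' t) t)
    (heom : ∀ t, q'' t = (2 * ω t) • q t) :
    ∀ (i : Fin 3) (t₁ t₂ : ℝ),
      (Real.sqrt (c₀ / 2) * f t₁ ^ (-(1 : ℝ) / 2) * q t₁ i * Real.sin (θ t₁)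
        + (f t₁ ^ ((1 : ℝ) / 2) * q' t₁ i
            - (f' t₁ / 2) * f t₁ ^ (-(1 : ℝ) / 2) * q t₁ i) * Real.cos (θ t₁)
      = Real.sqrt (c₀ / 2) * f t₂ ^ (-(1 : ℝ) / 2) * q t₂ i * Real.sin (θ t₂)
        + (f t₂ ^ ((1 : ℝ) / 2) * q' t₂ i
            - (f' t₂ / 2) * f t₂ ^ (-(1 : ℝ) / 2) * q t₂ i) * Real.cos (θ t₂)) ∧
      (-(Real.sqrt (c₀ / 2)) * f t₁ ^ (-(1 : ℝ) / 2) * q t₁ i * Real.cos (θ t₁)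
        + (f t₁ ^ ((1 : ℝ) / 2) * q' t₁ i
            - (f' t₁ / 2) * f t₁ ^ (-(1 : ℝ) / 2) * q t₁ i) * Real.sin (θ t₁)
      = -(Real.sqrt (c₀ / 2)) * f t₂ ^ (-(1 : ℝ) / 2) * q t₂ i * Real.cos (θ t₂)
        + (f t₂ ^ ((1 : ℝ) / 2) * q' t₂ i
            - (f' t₂ / 2) * f t₂ ^ (-(1 : ℝ) / 2) * q t₂ i) * Real.sin (θ t₂)) := by
  intro i t₁ t₂
  set s := √(c₀ / 2)
  have hs : s * s = c₀ / 2 := mul_self_sqrt (by positivity)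
  have heomi t : q'' t i = 2 * ω t * q t i := by simp [heom t]
  have hx t : HasDerivAt (fun t => q t i) (q' t i) t := hasDerivAt_euclideanSpace_apply (hq t) i
  have hx' t : HasDerivAt (fun t => q' t i) (q'' t i) t := hasDerivAt_euclideanSpace_apply (hq' t) i
  have hA := hasDerivAt_liouville_position s hf hfpos hx
  have hB t := (hasDerivAt_liouville_momentum c₀ hf hf' hfpos hω hx hx' heomi t).congr_deriv
    (show _ = -(s / f t * (s * f t ^ (-(1 : ℝ) / 2) * q t i)) by
      rw [show c₀ = 2 * (s * s) by linarith]; field_simp)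
  simpa only [neg_mul] using rotating_pair_invariants hA hB hθ t₁ t₂
end

section
/- Let n ≥ 1, let Q : EuclideanSpace ℝ (Fin n) → EuclideanSpace ℝ (Fin n) be differentiable, let L : EuclideanSpace ℝ (Fin n) → EuclideanSpace ℝ (Fin n) be twice differentiable, and let λ, b₀, b₁ be real constants with λ ≠ 0 and b₁ ≠ 0. Define S_{ab}(x) := (1/2)(∂_a L_b(x) + ∂_b L_a(x)). Assume: (i) S is a Killing tensor of the Euclidean metric, i.e. ∂_c S_{ab} + ∂_a S_{bc} + ∂_b S_{ca} = 0 for all indices a,b,c and all x; (ii) ∂_a( Σ_b L_b(x)·Q_b(x) ) = (λ³/b₁)·L_a(x) for all a and x; (iii) λ³·L_a(x) = −2b₁·Σ_b S_{ab}(x)·Q_b(x) for all a and x. Let q : ℝ → EuclideanSpace ℝ (Fin n) be twice differentiable satisfying q''(t) = −(b₀ + b₁t)·Q(q(t)). Then the quantity I_e(t) := −e^{λt}·Σ_{a,b} S_{ab}(q(t))·q_a'(t)·q_b'(t) + λ·e^{λt}·Σ_a L_a(q(t))·q_a'(t) + (b₀ − b₁/λ)·e^{λt}·Σ_a L_a(q(t))·Q_a(q(t))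 + b₁·t·e^{λt}·Σ_a L_a(q(t))·Q_a(q(t)) is constant in t. -/
/-!
Along a solution put `A = S(q̇, q̇)`, `B = L · q̇` and `C = L · Q`, with `ω = b₀ + b₁ t`.
Since `S` is the symmetric part of `∇L`, `Ḃ = A - ω C`; by (ii), `Ċ = (λ³/b₁) B`; and in
`Ȧ` the cubic term `∂_c S_ab q̇^a q̇^b q̇^c` vanishes by the Killing equation, while (iii)
turns the remaining `2 S(q̈, q̇)` into `ω (λ³/b₁) B`. With these three linear equations the
derivative of `e^{λt} (-A + λ B + (b₀ - b₁/λ + b₁ t) C)` is identically zero.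
-/

open Finset

section Sums

variable {ι M : Type*} [Fintype ι] [AddCommMonoid M]

lemma sum_sum_sum_rotate (F : ι → ι → ι → M) :
    ∑ a, ∑ b, ∑ c, F a b c = ∑ a, ∑ b, ∑ c, F c a b := by
  rw [sum_comm]
  exact sum_congr rfl fun _ _ => sum_comm

lemma sum_cubic_eq_zero_of_cyclic_sum_eq_zero (T : ι → ι → ι → ℝ)
    (hT : ∀ a b c, T a b c + T b c a + T c a b = 0) (v : ι → ℝ) :
    ∑ a, ∑ b, ∑ c, T a b c * v a * v b * v c = 0 := by
  have h₁ : ∑ a, ∑ b, ∑ c, T b c a * v a * v b * v c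
      = ∑ a, ∑ b, ∑ c, T a b c * v a * v b * v c := by
    rw [sum_sum_sum_rotate]; simp only [mul_comm, mul_left_comm]
  have h₂ : ∑ a, ∑ b, ∑ c, T c a b * v a * v b * v c
      = ∑ a, ∑ b, ∑ c, T a b c * v a * v b * v c := by
    rw [sum_sum_sum_rotate, sum_sum_sum_rotate]; simp only [mul_comm, mul_left_comm]
  have h₃ : ∑ a, ∑ b, ∑ c, (T a b c + T b c a + T c a b) * v a * v b * v c = 0 := by
    simp only [hT, zero_mul, sum_const_zero]
  simp only [add_mul, sum_add_distrib, h₁, h₂] at h₃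
  linarith

lemma sum_sum_symmetrize (M : ι → ι → ℝ) (v : ι → ℝ) :
    ∑ a, ∑ b, 1 / 2 * (M a b + M b a) * v a * v b = ∑ a, ∑ b, M a b * v a * v b := by
  have hswap : ∑ a, ∑ b, M b a * v a * v b = ∑ a, ∑ b, M a b * v a * v b := by
    rw [sum_comm]
    exact sum_congr rfl fun _ _ => sum_congr rfl fun _ _ => by ring
  simp only [mul_add, add_mul, sum_add_distrib, mul_assoc, ← mul_sum]
  simp only [← mul_assoc, hswap]
  ring

end Sums

section Calculus

variable {ι : Type*} [Fintype ι] {F : Type*} [NormedAddCommGroup F] [NormedSpace ℝ F]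

lemma HasDerivAt.euclidean_apply {γ : ℝ → EuclideanSpace ℝ ι} {v : EuclideanSpace ℝ ι}
    {t : ℝ} (hγ : HasDerivAt γ v t) (a : ι) : HasDerivAt (fun s => γ s a) (v a) t :=
  (PiLp.hasFDerivAt_apply 2 (γ t) a).comp_hasDerivAt t hγ

lemma fderiv_euclidean_apply {f : F → EuclideanSpace ℝ ι} {x : F}
    (hf : DifferentiableAt ℝ f x) (a : ι) (w : F) :
    fderiv ℝ (fun y => f y a) x w = fderiv ℝ f x w a := by
  have h : HasFDerivAt (fun y => f y a) (PiLp.proj 2 _ a ∘L fderiv ℝ f x) x :=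
    (PiLp.hasFDerivAt_apply (𝕜 := ℝ) 2 (f x) a).comp x hf.hasFDerivAt
  rw [h.fderiv]
  rfl

lemma Differentiable.fderiv_euclidean_apply {f : F → EuclideanSpace ℝ ι}
    (hf : Differentiable ℝ f) (hf' : Differentiable ℝ (fderiv ℝ f)) (a : ι) (w : F) :
    Differentiable ℝ (fun x => fderiv ℝ (fun y => f y a) x w) := by
  simp only [fun x => _root_.fderiv_euclidean_apply (hf x) a w]
  exact (differentiable_piLp 2).1 (hf'.clm_apply (differentiable_const w)) a

variable [DecidableEq ι]

lemma EuclideanSpace.apply_eq_sum_single (φ : EuclideanSpace ℝ ι →L[ℝ] ℝ)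
    (v : EuclideanSpace ℝ ι) : φ v = ∑ c, v c * φ (EuclideanSpace.single c 1) := by
  conv_lhs => rw [← (EuclideanSpace.basisFun ι ℝ).sum_repr v]
  simp [EuclideanSpace.basisFun_apply]

lemma DifferentiableAt.hasDerivAt_comp_eq_sum_single {f : EuclideanSpace ℝ ι → ℝ}
    {γ : ℝ → EuclideanSpace ℝ ι} {v : EuclideanSpace ℝ ι} {t : ℝ}
    (hf : DifferentiableAt ℝ f (γ t)) (hγ : HasDerivAt γ v t) :
    HasDerivAt (fun s => f (γ s))
      (∑ c, v c * fderiv ℝ f (γ t) (EuclideanSpace.single c 1)) t := by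
  rw [← EuclideanSpace.apply_eq_sum_single]
  exact hf.hasFDerivAt.comp_hasDerivAt t hγ

end Calculus

section Trajectory

variable {ι : Type*} [Fintype ι] [DecidableEq ι]

def IsKillingTensor (S : EuclideanSpace ℝ ι → ι → ι → ℝ) : Prop :=
  ∀ x a b c, fderiv ℝ (fun y => S y a b) x (EuclideanSpace.single c 1)
    + fderiv ℝ (fun y => S y b c) x (EuclideanSpace.single a 1)
    + fderiv ℝ (fun y => S y c a) x (EuclideanSpace.single b 1) = 0

variable {L : EuclideanSpace ℝ ι → EuclideanSpace ℝ ι} {S : EuclideanSpace ℝ ι → ι → ι → ℝ}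
  {q q' q'' : ℝ → EuclideanSpace ℝ ι} {t : ℝ}

lemma hasDerivAt_comp_of_fderiv_single_eq {Φ : EuclideanSpace ℝ ι → ℝ} {κ : ℝ}
    {γ : ℝ → EuclideanSpace ℝ ι} {v : EuclideanSpace ℝ ι} (hΦ : DifferentiableAt ℝ Φ (γ t))
    (hgrad : ∀ a, fderiv ℝ Φ (γ t) (EuclideanSpace.single a 1) = κ * L (γ t) a)
    (hγ : HasDerivAt γ v t) :
    HasDerivAt (fun s => Φ (γ s)) (κ * ∑ a, L (γ t) a * v a) t := by
  refine (hΦ.hasDerivAt_comp_eq_sum_single hγ).congr_deriv ?_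
  rw [mul_sum]
  exact sum_congr rfl fun a _ => by rw [hgrad]; ring

lemma hasDerivAt_sum_mul_deriv (hL : Differentiable ℝ L)
    (hS : ∀ x a b, S x a b = 1 / 2 * (fderiv ℝ (fun y => L y b) x (EuclideanSpace.single a 1)
      + fderiv ℝ (fun y => L y a) x (EuclideanSpace.single b 1)))
    (hq : HasDerivAt q (q' t) t) (hq' : HasDerivAt q' (q'' t) t) :
    HasDerivAt (fun s => ∑ a, L (q s) a * q' s a)
      (∑ a, ∑ b, S (q t) a b * q' t a * q' t b + ∑ a, L (q t) a * q'' t a) t := by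
  have h := HasDerivAt.fun_sum (u := univ) fun a _ =>
    (((differentiable_piLp 2).1 hL a (q t)).hasDerivAt_comp_eq_sum_single hq).mul
      (hq'.euclidean_apply a)
  refine h.congr_deriv ?_
  rw [sum_add_distrib]
  congr 1
  simp only [hS, sum_sum_symmetrize (fun a b => fderiv ℝ (fun y => L y b) (q t)
    (EuclideanSpace.single a 1)), sum_mul]
  rw [sum_comm]
  exact sum_congr rfl fun _ _ => sum_congr rfl fun _ _ => by ring

lemma IsKillingTensor.hasDerivAt_sum_mul_mul (hK : IsKillingTensor S)
    (hSd : ∀ a b, DifferentiableAt ℝ (fun x => S x a b) (q t))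
    (hsymm : ∀ x a b, S x a b = S x b a)
    (hq : HasDerivAt q (q' t) t) (hq' : HasDerivAt q' (q'' t) t) :
    HasDerivAt (fun s => ∑ a, ∑ b, S (q s) a b * q' s a * q' s b)
      (2 * ∑ a, (∑ b, S (q t) a b * q'' t b) * q' t a) t := by
  have h := HasDerivAt.fun_sum (u := univ) fun a _ =>
    HasDerivAt.fun_sum (u := univ) fun b _ =>
      (((hSd a b).hasDerivAt_comp_eq_sum_single hq).mul (hq'.euclidean_apply a)).mul
        (hq'.euclidean_apply b)
  refine h.congr_deriv ?_
  have hcubic : ∑ a, ∑ b, (∑ c, q' t c * fderiv ℝ (fun y => S y a b) (q t)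
      (EuclideanSpace.single c 1)) * q' t a * q' t b = 0 := by
    rw [← sum_cubic_eq_zero_of_cyclic_sum_eq_zero _ (hK (q t)) (q' t)]
    simp only [sum_mul]
    exact sum_congr rfl fun _ _ => sum_congr rfl fun _ _ =>
      sum_congr rfl fun _ _ => by ring
  have hswap : ∑ a, ∑ b, S (q t) a b * q'' t a * q' t b
      = ∑ a, ∑ b, S (q t) a b * q' t a * q'' t b := by
    rw [sum_comm]
    exact sum_congr rfl fun _ _ => sum_congr rfl fun _ _ => by rw [hsymm]; ring
  have hfactor : ∑ a, (∑ b, S (q t) a b * q'' t b) * q' t a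
      = ∑ a, ∑ b, S (q t) a b * q' t a * q'' t b := by
    simp only [sum_mul]
    exact sum_congr rfl fun _ _ => sum_congr rfl fun _ _ => by ring
  simp only [Pi.mul_apply, add_mul, sum_add_distrib, hcubic, hswap, hfactor, zero_add]
  ring

end Trajectory

lemma exp_mul_combination_eq_of_hasDerivAt {lam b₀ b₁ : ℝ} (hlam : lam ≠ 0) (hb₁ : b₁ ≠ 0)
    {A B C : ℝ → ℝ} (hA : ∀ t, HasDerivAt A ((b₀ + b₁ * t) * (lam ^ 3 / b₁) * B t) t)
    (hB : ∀ t, HasDerivAt B (A t - (b₀ + b₁ * t) * C t) t)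
    (hC : ∀ t, HasDerivAt C (lam ^ 3 / b₁ * B t) t) (t₁ t₂ : ℝ) :
    -Real.exp (lam * t₁) * A t₁ + lam * Real.exp (lam * t₁) * B t₁
        + (b₀ - b₁ / lam) * Real.exp (lam * t₁) * C t₁
        + b₁ * t₁ * Real.exp (lam * t₁) * C t₁
      = -Real.exp (lam * t₂) * A t₂ + lam * Real.exp (lam * t₂) * B t₂
        + (b₀ - b₁ / lam) * Real.exp (lam * t₂) * C t₂
        + b₁ * t₂ * Real.exp (lam * t₂) * C t₂ := by
  have hexp : ∀ t, HasDerivAt (fun s => Real.exp (lam * s)) (Real.exp (lam * t) * lam) t :=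
    fun t => by simpa using ((hasDerivAt_id t).const_mul lam).exp
  have hF : ∀ t, HasDerivAt
      (fun s => -Real.exp (lam * s) * A s + lam * Real.exp (lam * s) * B s
        + (b₀ - b₁ / lam) * Real.exp (lam * s) * C s + b₁ * s * Real.exp (lam * s) * C s) 0 t := by
    intro t
    have h := (((hexp t).neg.mul (hA t)).add (((hexp t).const_mul lam).mul (hB t))).add
      (((hexp t).const_mul (b₀ - b₁ / lam)).mul (hC t)) |>.add
      ((((hasDerivAt_id t).const_mul b₁).mul (hexp t)).mul (hC t))
    refine h.congr_deriv ?_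
    simp only [Pi.mul_apply, Pi.neg_apply, id]
    field_simp
    ring
  exact is_const_of_deriv_eq_zero (fun t => (hF t).differentiableAt) (fun t => (hF t).deriv)
    t₁ t₂

theorem Ie_first_integral_general (n : ℕ)
    (Q L : EuclideanSpace ℝ (Fin n) → EuclideanSpace ℝ (Fin n))
    (hQ : Differentiable ℝ Q)
    (hL : Differentiable ℝ L)
    (hL' : Differentiable ℝ (fderiv ℝ L))
    (lam b₀ b₁ : ℝ) (hlam : lam ≠ 0) (hb₁ : b₁ ≠ 0)
    (S : EuclideanSpace ℝ (Fin n) → Fin n → Fin n → ℝ)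
    (hS : ∀ x a b, S x a b =
      (1 / 2) * (fderiv ℝ (fun y => L y b) x (EuclideanSpace.single a 1)
        + fderiv ℝ (fun y => L y a) x (EuclideanSpace.single b 1)))
    (hKT : ∀ (x : EuclideanSpace ℝ (Fin n)) (a b c : Fin n),
      fderiv ℝ (fun y => S y a b) x (EuclideanSpace.single c 1)
        + fderiv ℝ (fun y => S y b c) x (EuclideanSpace.single a 1)
        + fderiv ℝ (fun y => S y c a) x (EuclideanSpace.single b 1) = 0)
    (hgrad : ∀ (x : EuclideanSpace ℝ (Fin n)) (a : Fin n),
      fderiv ℝ (fun y => ∑ b : Fin n, L y b * Q y b) x (EuclideanSpace.single a 1)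
        = (lam ^ 3 / b₁) * L x a)
    (hvec : ∀ (x : EuclideanSpace ℝ (Fin n)) (a : Fin n),
      lam ^ 3 * L x a = -2 * b₁ * ∑ b : Fin n, S x a b * Q x b)
    (q q' q'' : ℝ → EuclideanSpace ℝ (Fin n))
    (hq : ∀ t, HasDerivAt q (q' t) t)
    (hq' : ∀ t, HasDerivAt q' (q'' t) t)
    (heom : ∀ t, q'' t = (-(b₀ + b₁ * t)) • Q (q t)) :
    ∀ t₁ t₂,
      -Real.exp (lam * t₁) * (∑ a : Fin n, ∑ b : Fin n, S (q t₁) a b * q' t₁ a * q' t₁ b)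
        + lam * Real.exp (lam * t₁) * (∑ a : Fin n, L (q t₁) a * q' t₁ a)
        + (b₀ - b₁ / lam) * Real.exp (lam * t₁) * (∑ a : Fin n, L (q t₁) a * Q (q t₁) a)
        + b₁ * t₁ * Real.exp (lam * t₁) * (∑ a : Fin n, L (q t₁) a * Q (q t₁) a)
      = -Real.exp (lam * t₂) * (∑ a : Fin n, ∑ b : Fin n, S (q t₂) a b * q' t₂ a * q' t₂ b)
        + lam * Real.exp (lam * t₂) * (∑ a : Fin n, L (q t₂) a * q' t₂ a)
        + (b₀ - b₁ / lam) * Real.exp (lam * t₂) * (∑ a : Fin n, L (q t₂) a * Q (q t₂) a)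
        + b₁ * t₂ * Real.exp (lam * t₂) * (∑ a : Fin n, L (q t₂) a * Q (q t₂) a) := by
  have hSd : ∀ a b, Differentiable ℝ (fun x => S x a b) := fun a b => by
    simp only [hS]
    exact ((hL.fderiv_euclidean_apply hL' b _).add
      (hL.fderiv_euclidean_apply hL' a _)).const_mul _
  have hsymm : ∀ x a b, S x a b = S x b a := fun x a b => by rw [hS, hS]; ring
  have hSQ : ∀ x a, ∑ b, S x a b * Q x b = -(lam ^ 3 / (2 * b₁)) * L x a := fun x a => by
    field_simp
    linarith [hvec x a]
  have hq''c : ∀ t a, q'' t a = -(b₀ + b₁ * t) * Q (q t) a := fun t a => by simp [heom]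
  refine exp_mul_combination_eq_of_hasDerivAt hlam hb₁
    (fun t => ?_) (fun t => ?_) (fun t => ?_)
  · refine (IsKillingTensor.hasDerivAt_sum_mul_mul hKT (fun a b => hSd a b _) hsymm (hq t)
      (hq' t)).congr_deriv ?_
    simp only [hq''c, mul_left_comm _ (-(b₀ + b₁ * t)), ← mul_sum, hSQ, mul_assoc]
    field_simp
  · refine (hasDerivAt_sum_mul_deriv hL hS (hq t) (hq' t)).congr_deriv ?_
    simp only [hq''c, mul_left_comm _ (-(b₀ + b₁ * t)), ← mul_sum]
    ring
  · exact hasDerivAt_comp_of_fderiv_single_eq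
      ((Differentiable.fun_sum fun b _ =>
        ((differentiable_piLp 2).1 hL b).mul ((differentiable_piLp 2).1 hQ b)) _) (hgrad _) (hq t)

/-- Integral 2 of Theorem 1: for the system `q'' = −(b₀ + b₁ t) Q(q)` in Euclidean
space, with `S_{ab} = L_{(a,b)}` a Killing tensor satisfying the stated constraints,
the quantity `I_e` is a first integral. -/
theorem Ie_first_integral (n : ℕ) (hn : 1 ≤ n)
    (Q L : EuclideanSpace ℝ (Fin n) → EuclideanSpace ℝ (Fin n))
    (hQ : Differentiable ℝ Q)
    (hL : Differentiable ℝ L)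
    (hL' : Differentiable ℝ (fderiv ℝ L))
    (lam b₀ b₁ : ℝ) (hlam : lam ≠ 0) (hb₁ : b₁ ≠ 0)
    (S : EuclideanSpace ℝ (Fin n) → Fin n → Fin n → ℝ)
    (hS : ∀ x a b, S x a b =
      (1 / 2) * (fderiv ℝ (fun y => L y b) x (EuclideanSpace.single a 1)
        + fderiv ℝ (fun y => L y a) x (EuclideanSpace.single b 1)))
    (hKT : ∀ (x : EuclideanSpace ℝ (Fin n)) (a b c : Fin n),
      fderiv ℝ (fun y => S y a b) x (EuclideanSpace.single c 1)
        + fderiv ℝ (fun y => S y b c) x (EuclideanSpace.single a 1)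
        + fderiv ℝ (fun y => S y c a) x (EuclideanSpace.single b 1) = 0)
    (hgrad : ∀ (x : EuclideanSpace ℝ (Fin n)) (a : Fin n),
      fderiv ℝ (fun y => ∑ b : Fin n, L y b * Q y b) x (EuclideanSpace.single a 1)
        = (lam ^ 3 / b₁) * L x a)
    (hvec : ∀ (x : EuclideanSpace ℝ (Fin n)) (a : Fin n),
      lam ^ 3 * L x a = -2 * b₁ * ∑ b : Fin n, S x a b * Q x b)
    (q q' q'' : ℝ → EuclideanSpace ℝ (Fin n))
    (hq : ∀ t, HasDerivAt q (q' t) t)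
    (hq' : ∀ t, HasDerivAt q' (q'' t) t)
    (heom : ∀ t, q'' t = (-(b₀ + b₁ * t)) • Q (q t)) :
    ∀ t₁ t₂,
      -Real.exp (lam * t₁) * (∑ a : Fin n, ∑ b : Fin n, S (q t₁) a b * q' t₁ a * q' t₁ b)
        + lam * Real.exp (lam * t₁) * (∑ a : Fin n, L (q t₁) a * q' t₁ a)
        + (b₀ - b₁ / lam) * Real.exp (lam * t₁) * (∑ a : Fin n, L (q t₁) a * Q (q t₁) a)
        + b₁ * t₁ * Real.exp (lam * t₁) * (∑ a : Fin n, L (q t₁) a * Q (q t₁) a)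
      = -Real.exp (lam * t₂) * (∑ a : Fin n, ∑ b : Fin n, S (q t₂) a b * q' t₂ a * q' t₂ b)
        + lam * Real.exp (lam * t₂) * (∑ a : Fin n, L (q t₂) a * q' t₂ a)
        + (b₀ - b₁ / lam) * Real.exp (lam * t₂) * (∑ a : Fin n, L (q t₂) a * Q (q t₂) a)
        + b₁ * t₂ * Real.exp (lam * t₂) * (∑ a : Fin n, L (q t₂) a * Q (q t₂) a) :=
  Ie_first_integral_general n Q L hQ hL hL' lam b₀ b₁ hlam hb₁ S hS hKT hgrad hvec q q' q'' hq hq'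
    heom
end

section
/- Let φ : ℝ → ℝ be continuous, let Φ be an antiderivative of φ (Φ' = φ), let ρ : ℝ → ℝ be twice differentiable with ρ(t) > 0 for all t, and let θ : ℝ → ℝ be differentiable with θ'(t) = ρ(t)^(−2)·e^{Φ(t)}. Define ω(t) := −ρ''(t)/ρ(t) + φ(t)·ρ'(t)/ρ(t) + ρ(t)^(−4)·e^{2Φ(t)}. Then for any real constants A, B, the function x(t) := ρ(t)·( A·sin(θ(t)) + B·cos(θ(t)) ) satisfies x''(t) = −ω(t)·x(t) + φ(t)·x'(t) for all t. -/
/-!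
With `S = A sin θ + B cos θ` and `C = A cos θ - B sin θ` one has `S' = θ' C` and `C' = -θ' S`.
Since `ρ² θ' = e^Φ`, the first derivative is `x' = ρ' S + (e^Φ / ρ) C`, and
`(e^Φ / ρ)' = (φ - ρ'/ρ) e^Φ / ρ`; differentiating once more, the `ρ' θ' C` terms cancel and
`x'' = ρ'' S + φ (e^Φ / ρ) C - ρ θ'² S`, which is `-ω x + φ x'` because `ρ θ'² = ρ⁻³ e^{2Φ}`.
-/

open Real

theorem HasDerivAt.sin_add_cos {θ : ℝ → ℝ} {w t : ℝ} (A B : ℝ) (hθ : HasDerivAt θ w t) :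
    HasDerivAt (fun s => A * Real.sin (θ s) + B * Real.cos (θ s))
      ((-B * Real.sin (θ t) + A * Real.cos (θ t)) * w) t :=
  (((hθ.sin).const_mul A).add ((hθ.cos).const_mul B)).congr_deriv (by ring)

theorem HasDerivAt.exp_div {Φ ρ : ℝ → ℝ} {φ ρ' t : ℝ} (hΦ : HasDerivAt Φ φ t)
    (hρ : HasDerivAt ρ ρ' t) (hρt : ρ t ≠ 0) :
    HasDerivAt (fun s => Real.exp (Φ s) / ρ s) ((φ - ρ' / ρ t) * (Real.exp (Φ t) / ρ t)) t :=
  (hΦ.exp.div hρ hρt).congr_deriv (by field_simp)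

theorem damped_oscillator_general_solution_general (φ Φ : ℝ → ℝ)
    (hΦ : ∀ t, HasDerivAt Φ (φ t) t)
    (ρ ρ' ρ'' : ℝ → ℝ)
    (hρ : ∀ t, HasDerivAt ρ (ρ' t) t)
    (hρ' : ∀ t, HasDerivAt ρ' (ρ'' t) t)
    (hρpos : ∀ t, 0 < ρ t)
    (θ : ℝ → ℝ)
    (hθ : ∀ t, HasDerivAt θ ((ρ t) ^ (-2 : ℝ) * Real.exp (Φ t)) t)
    (ω : ℝ → ℝ)
    (hω : ∀ t, ω t = -(ρ'' t / ρ t) + φ t * (ρ' t / ρ t)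
      + (ρ t) ^ (-4 : ℝ) * Real.exp (2 * Φ t))
    (A B : ℝ) :
    ∀ t, deriv (deriv fun s => ρ s * (A * Real.sin (θ s) + B * Real.cos (θ s))) t
      = -(ω t) * (ρ t * (A * Real.sin (θ t) + B * Real.cos (θ t)))
        + φ t * deriv (fun s => ρ s * (A * Real.sin (θ s) + B * Real.cos (θ s))) t := by
  intro t
  have hρne s : ρ s ≠ 0 := (hρpos s).ne'
  have hθ' s : HasDerivAt θ (exp (Φ s) / ρ s ^ 2) s := by
    convert hθ s using 1
    rw [rpow_neg_ofNat, zpow_neg, zpow_ofNat]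
    ring
  have hx' s : HasDerivAt (fun s => ρ s * (A * sin (θ s) + B * cos (θ s)))
      (ρ' s * (A * sin (θ s) + B * cos (θ s))
        + exp (Φ s) / ρ s * (-B * sin (θ s) + A * cos (θ s))) s :=
    ((hρ s).mul ((hθ' s).sin_add_cos A B)).congr_deriv (by field_simp [hρne s])
  rw [(hx' t).deriv, funext fun s => (hx' s).deriv]
  refine (((hρ' t).mul ((hθ' t).sin_add_cos A B)).add
    (((hΦ t).exp_div (hρ t) (hρne t)).mul ((hθ' t).sin_add_cos (-B) A))).deriv.trans ?_
  rw [hω t, rpow_neg_ofNat, zpow_neg, zpow_ofNat, mul_comm 2 (Φ t), exp_mul, rpow_two]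
  field_simp [hρne t]
  ring

/-- For the damped 1d oscillator `ẍ = −ω(t)x + φ(t)ẋ` with
`ω = −ρ''/ρ + φρ'/ρ + ρ⁻⁴e^{2Φ}` and `θ' = ρ⁻²e^{Φ}`, the function
`x = ρ(A sin θ + B cos θ)` is a solution. -/
theorem damped_oscillator_general_solution (φ Φ : ℝ → ℝ)
    (hφ : Continuous φ)
    (hΦ : ∀ t, HasDerivAt Φ (φ t) t)
    (ρ ρ' ρ'' : ℝ → ℝ)
    (hρ : ∀ t, HasDerivAt ρ (ρ' t) t)
    (hρ' : ∀ t, HasDerivAt ρ' (ρ'' t) t)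
    (hρpos : ∀ t, 0 < ρ t)
    (θ : ℝ → ℝ)
    (hθ : ∀ t, HasDerivAt θ ((ρ t) ^ (-2 : ℝ) * Real.exp (Φ t)) t)
    (ω : ℝ → ℝ)
    (hω : ∀ t, ω t = -(ρ'' t / ρ t) + φ t * (ρ' t / ρ t)
      + (ρ t) ^ (-4 : ℝ) * Real.exp (2 * Φ t))
    (A B : ℝ) :
    ∀ t, deriv (deriv fun s => ρ s * (A * Real.sin (θ s) + B * Real.cos (θ s))) t
      = -(ω t) * (ρ t * (A * Real.sin (θ t) + B * Real.cos (θ t)))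
        + φ t * deriv (fun s => ρ s * (A * Real.sin (θ s) + B * Real.cos (θ s))) t :=
  damped_oscillator_general_solution_general φ Φ hΦ ρ ρ' ρ'' hρ hρ' hρpos θ hθ ω hω A B
end

section
/- Let μ be a real constant, φ, ω : ℝ → ℝ with φ continuous, and let Φ be an antiderivative of φ. Let x : ℝ → ℝ be twice differentiable with x(t) > 0 for all t, satisfying x''(t) = −ω(t)·x(t)^μ + φ(t)·x'(t). Let τ : ℝ → ℝ be differentiable with τ'(s) = e^{−Φ(τ(s))} for all s. Then y := x ∘ τ is twice differentiable and satisfies y''(s) = −ω(τ(s))·e^{−2Φ(τ(s))}·y(s)^μ for all s. -/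
/-! Along `τ' = e^{-Φ ∘ τ}` the chain rule gives `(x ∘ τ)' = (x' ∘ τ) e^{-Φ ∘ τ}`; differentiating
once more, the factor `e^{-Φ}` contributes `-φ x'`, which cancels the damping term, so that
`(x ∘ τ)'' = (x'' - φ x') ∘ τ · e^{-2Φ ∘ τ} = -(ω x^μ) ∘ τ · e^{-2Φ ∘ τ}`. -/

open Real

theorem hasDerivAt_mul_exp_neg_comp {Φ f τ : ℝ → ℝ} {s a b : ℝ}
    (hΦ : HasDerivAt Φ a (τ s)) (hf : HasDerivAt f b (τ s))
    (hτ : HasDerivAt τ (exp (-Φ (τ s))) s) :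
    HasDerivAt (fun s => f (τ s) * exp (-Φ (τ s)))
      ((b - a * f (τ s)) * exp (-(2 * Φ (τ s)))) s := by
  have hexp : HasDerivAt (fun t => exp (-Φ t)) (exp (-Φ (τ s)) * -a) (τ s) :=
    (hasDerivAt_exp _).comp _ hΦ.neg
  refine ((hf.mul hexp).comp s hτ).congr_deriv ?_
  rw [show -(2 * Φ (τ s)) = -Φ (τ s) + -Φ (τ s) by ring, exp_add]
  ring

theorem damping_absorbed_by_reparameterization_general (μ : ℝ) (φ ω : ℝ → ℝ)
    (Φ : ℝ → ℝ)
    (hΦ : ∀ t, HasDerivAt Φ (φ t) t)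
    (x x' x'' : ℝ → ℝ)
    (hx : ∀ t, HasDerivAt x (x' t) t)
    (hx' : ∀ t, HasDerivAt x' (x'' t) t)
    (heom : ∀ t, x'' t = -(ω t * x t ^ μ) + φ t * x' t)
    (τ : ℝ → ℝ)
    (hτ : ∀ s, HasDerivAt τ (Real.exp (-Φ (τ s))) s) :
    ∃ y' y'' : ℝ → ℝ,
      (∀ s, HasDerivAt (x ∘ τ) (y' s) s) ∧
      (∀ s, HasDerivAt y' (y'' s) s) ∧
      (∀ s, y'' s = -(ω (τ s) * Real.exp (-(2 * Φ (τ s))) * (x ∘ τ) s ^ μ)) := by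
  refine ⟨fun s => x' (τ s) * exp (-Φ (τ s)),
    fun s => -(ω (τ s) * exp (-(2 * Φ (τ s))) * (x ∘ τ) s ^ μ),
    fun s => (hx (τ s)).comp s (hτ s), fun s => ?_, fun s => rfl⟩
  convert hasDerivAt_mul_exp_neg_comp (hΦ (τ s)) (hx' (τ s)) (hτ s) using 1
  simp only [Function.comp_apply, heom]
  ring

/-- Under the reparameterization `τ' = e^{−Φ∘τ}`, the damped non-linear equation
`ẍ = −ω(t)x^μ + φ(t)ẋ` becomes `y'' = −ω(τ(s))e^{−2Φ(τ(s))} y^μ` for `y = x ∘ τ`. -/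
theorem damping_absorbed_by_reparameterization (μ : ℝ) (φ ω : ℝ → ℝ)
    (hφ : Continuous φ) (Φ : ℝ → ℝ)
    (hΦ : ∀ t, HasDerivAt Φ (φ t) t)
    (x x' x'' : ℝ → ℝ)
    (hx : ∀ t, HasDerivAt x (x' t) t)
    (hx' : ∀ t, HasDerivAt x' (x'' t) t)
    (hxpos : ∀ t, 0 < x t)
    (heom : ∀ t, x'' t = -(ω t * x t ^ μ) + φ t * x' t)
    (τ : ℝ → ℝ)
    (hτ : ∀ s, HasDerivAt τ (Real.exp (-Φ (τ s))) s) :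
    ∃ y' y'' : ℝ → ℝ,
      (∀ s, HasDerivAt (x ∘ τ) (y' s) s) ∧
      (∀ s, HasDerivAt y' (y'' s) s) ∧
      (∀ s, y'' s = -(ω (τ s) * Real.exp (-(2 * Φ (τ s))) * (x ∘ τ) s ^ μ)) :=
  damping_absorbed_by_reparameterization_general μ φ ω Φ hΦ x x' x'' hx hx' heom τ hτ
end

section
/- Let μ ≠ −1 be a real constant, c₁, c₂, c₃ real constants, and φ : ℝ → ℝ continuous. Let Φ be an antiderivative of φ and S an antiderivative of e^Φ (S' = e^Φ). Set P(t) := c₁ + c₂·S(t) + c₃·S(t)², assumed positive for all t in an open interval J, and define ω(t) := P(t)^(−(μ+3)/2)·e^{2Φ(t)}. Let x : J → ℝ be twice differentiable with x(t) > 0 on J, satisfying x''(t) = −ω(t)·x(t)^μ + φ(t)·x'(t). Then the quantity I(t) := P(t)·e^{−2Φ(t)}·x'(t)² − (c₂ + 2c₃·S(t))·e^{−Φ(t)}·x(t)·x'(t) + (2/(μ+1))·P(t)^(−(μ+1)/2)·x(t)^{μ+1} + c₃·x(t)² is constant on J. -/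
/-!
In the time `τ = S(t)` the damping disappears: `v = e^{-Φ} x'` is the `τ`-velocity, and the
equation becomes `dv/dτ = -P^{-(μ+3)/2} x^μ` with `P` a quadratic polynomial in `τ`.
For such an equation `P v² - P_τ x v + 2/(μ+1) P^{-(μ+1)/2} x^{μ+1} + (P_ττ / 2) x²` is
conserved: differentiating, the `v²` and `x v` terms cancel because `P_ττ` is constant, and the
remaining terms cancel by the equation of motion. Every `t`-derivative carries the common
factor `S' = e^Φ`, so it is enough to check this at a single point with an arbitrary factor `e`.
-/

open Real Set

noncomputable def quadraticFirstIntegral (μ c₂ c₃ P S x v : ℝ) : ℝ :=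
  P * v ^ 2 - (c₂ + 2 * c₃ * S) * x * v + 2 / (μ + 1) * P ^ (-(μ + 1) / 2) * x ^ (μ + 1)
    + c₃ * x ^ 2

theorem HasDerivAt.quadratic_comp {S : ℝ → ℝ} {e t : ℝ} (hS : HasDerivAt S e t)
    (c₁ c₂ c₃ : ℝ) :
    HasDerivAt (fun s => c₁ + c₂ * S s + c₃ * S s ^ 2) ((c₂ + 2 * c₃ * S t) * e) t :=
  (((hS.const_mul c₂).const_add c₁).add ((hS.pow 2).const_mul c₃)).congr_deriv (by ring)

theorem HasDerivAt.exp_neg_mul {Φ y : ℝ → ℝ} {φ y' t : ℝ} (hΦ : HasDerivAt Φ φ t)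
    (hy : HasDerivAt y y' t) :
    HasDerivAt (fun s => Real.exp (-Φ s) * y s) (Real.exp (-Φ t) * (y' - φ * y t)) t :=
  (hΦ.neg.exp.mul hy).congr_deriv (by rw [Pi.neg_apply]; ring)

theorem hasDerivAt_quadraticFirstIntegral {μ c₂ c₃ e t : ℝ} {P S x v : ℝ → ℝ} (hμ : μ ≠ -1)
    (hS : HasDerivAt S e t) (hP : HasDerivAt P ((c₂ + 2 * c₃ * S t) * e) t)
    (hx : HasDerivAt x (e * v t) t)
    (hv : HasDerivAt v (-(e * P t ^ (-(μ + 3) / 2) * x t ^ μ)) t)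
    (hP0 : P t ≠ 0) (hx0 : x t ≠ 0) :
    HasDerivAt (fun s => quadraticFirstIntegral μ c₂ c₃ (P s) (S s) (x s) (v s)) 0 t := by
  have hμ1 : μ + 1 ≠ 0 := fun h => hμ (by linarith)
  have hderiv := (((hP.mul (hv.pow 2)).sub
    (((((hS.const_mul (2 * c₃)).const_add c₂).mul hx).mul hv))).add
    (((hP.rpow_const (p := -(μ + 1) / 2) (Or.inl hP0)).const_mul (2 / (μ + 1))).mul
      (hx.rpow_const (p := μ + 1) (Or.inl hx0)))).add ((hx.pow 2).const_mul c₃)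
  refine hderiv.congr_deriv ?_
  have hP_pow : P t ^ (-(μ + 3) / 2) = P t ^ (-(μ + 1) / 2) / P t := by
    rw [show -(μ + 3) / 2 = -(μ + 1) / 2 - 1 by ring, rpow_sub_one hP0]
  rw [rpow_sub_one hP0, hP_pow, add_sub_cancel_right, rpow_add_one hx0]
  simp only [Pi.pow_apply, Pi.mul_apply]
  field_simp
  ring

theorem damped_nonlinear_QFI_general (μ : ℝ) (hμ : μ ≠ -1) (c₁ c₂ c₃ : ℝ)
    (φ : ℝ → ℝ)
    (Φ : ℝ → ℝ) (hΦ : ∀ t, HasDerivAt Φ (φ t) t)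
    (S : ℝ → ℝ) (hS : ∀ t, HasDerivAt S (Real.exp (Φ t)) t)
    (P : ℝ → ℝ) (hP : ∀ t, P t = c₁ + c₂ * S t + c₃ * (S t) ^ 2) (a b : ℝ)
    (hPpos : ∀ t ∈ Set.Ioo a b, 0 < P t)
    (ω : ℝ → ℝ)
    (hω : ∀ t, ω t = P t ^ (-(μ + 3) / 2) * Real.exp (2 * Φ t))
    (x x' x'' : ℝ → ℝ)
    (hx : ∀ t ∈ Set.Ioo a b, HasDerivAt x (x' t) t)
    (hx' : ∀ t ∈ Set.Ioo a b, HasDerivAt x' (x'' t) t)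
    (hxpos : ∀ t ∈ Set.Ioo a b, 0 < x t)
    (heom : ∀ t ∈ Set.Ioo a b, x'' t = -(ω t * x t ^ μ) + φ t * x' t) :
    ∀ t₁ ∈ Set.Ioo a b, ∀ t₂ ∈ Set.Ioo a b,
      P t₁ * Real.exp (-(2 * Φ t₁)) * (x' t₁) ^ 2
        - (c₂ + 2 * c₃ * S t₁) * Real.exp (-Φ t₁) * x t₁ * x' t₁
        + (2 / (μ + 1)) * P t₁ ^ (-(μ + 1) / 2) * x t₁ ^ (μ + 1) + c₃ * (x t₁) ^ 2
      = P t₂ * Real.exp (-(2 * Φ t₂)) * (x' t₂) ^ 2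
        - (c₂ + 2 * c₃ * S t₂) * Real.exp (-Φ t₂) * x t₂ * x' t₂
        + (2 / (μ + 1)) * P t₂ ^ (-(μ + 1) / 2) * x t₂ ^ (μ + 1) + c₃ * (x t₂) ^ 2 := by
  set v : ℝ → ℝ := fun t => exp (-Φ t) * x' t
  have hI : ∀ t, P t * exp (-(2 * Φ t)) * x' t ^ 2
      - (c₂ + 2 * c₃ * S t) * exp (-Φ t) * x t * x' t
      + 2 / (μ + 1) * P t ^ (-(μ + 1) / 2) * x t ^ (μ + 1) + c₃ * x t ^ 2
      = quadraticFirstIntegral μ c₂ c₃ (P t) (S t) (x t) (v t) := fun t => by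
    rw [quadraticFirstIntegral, show -(2 * Φ t) = -Φ t + -Φ t by ring, exp_add]
    ring
  have hI_deriv : ∀ t ∈ Ioo a b,
      HasDerivAt (fun s => quadraticFirstIntegral μ c₂ c₃ (P s) (S s) (x s) (v s)) 0 t := by
    intro t ht
    have hPd : HasDerivAt P ((c₂ + 2 * c₃ * S t) * exp (Φ t)) t := by
      rw [show P = _ from funext hP]
      exact (hS t).quadratic_comp c₁ c₂ c₃
    have hxd : HasDerivAt x (exp (Φ t) * v t) t := by
      rw [← mul_assoc, ← exp_add, add_neg_cancel, exp_zero, one_mul]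
      exact hx t ht
    have hvd : HasDerivAt v (-(exp (Φ t) * P t ^ (-(μ + 3) / 2) * x t ^ μ)) t := by
      refine ((hΦ t).exp_neg_mul (hx' t ht)).congr_deriv ?_
      rw [heom t ht, hω t, show 2 * Φ t = Φ t + Φ t by ring, exp_add, exp_neg]
      field_simp
      ring
    exact hasDerivAt_quadraticFirstIntegral hμ (hS t) hPd hxd hvd (hPpos t ht).ne'
      (hxpos t ht).ne'
  intro t₁ h₁ t₂ h₂
  rw [hI, hI]
  exact isOpen_Ioo.is_const_of_deriv_eq_zero isPreconnected_Ioo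
    (fun t ht => (hI_deriv t ht).differentiableAt.differentiableWithinAt)
    (fun t ht => (hI_deriv t ht).deriv) h₁ h₂

/-- The quadratic first integral of the damped non-linear equation
`ẍ = −ω(t)x^μ + φ(t)ẋ`, `μ ≠ −1`, for the integrable family
`ω = (c₁ + c₂S + c₃S²)^(−(μ+3)/2) e^{2Φ}` where `Φ' = φ` and `S' = e^Φ`. -/
theorem damped_nonlinear_QFI (μ : ℝ) (hμ : μ ≠ -1) (c₁ c₂ c₃ : ℝ)
    (φ : ℝ → ℝ) (hφ : Continuous φ)
    (Φ : ℝ → ℝ) (hΦ : ∀ t, HasDerivAt Φ (φ t) t)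
    (S : ℝ → ℝ) (hS : ∀ t, HasDerivAt S (Real.exp (Φ t)) t)
    (P : ℝ → ℝ) (hP : ∀ t, P t = c₁ + c₂ * S t + c₃ * (S t) ^ 2) (a b : ℝ)
    (hPpos : ∀ t ∈ Set.Ioo a b, 0 < P t)
    (ω : ℝ → ℝ)
    (hω : ∀ t, ω t = P t ^ (-(μ + 3) / 2) * Real.exp (2 * Φ t))
    (x x' x'' : ℝ → ℝ)
    (hx : ∀ t ∈ Set.Ioo a b, HasDerivAt x (x' t) t)
    (hx' : ∀ t ∈ Set.Ioo a b, HasDerivAt x' (x'' t) t)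
    (hxpos : ∀ t ∈ Set.Ioo a b, 0 < x t)
    (heom : ∀ t ∈ Set.Ioo a b, x'' t = -(ω t * x t ^ μ) + φ t * x' t) :
    ∀ t₁ ∈ Set.Ioo a b, ∀ t₂ ∈ Set.Ioo a b,
      P t₁ * Real.exp (-(2 * Φ t₁)) * (x' t₁) ^ 2
        - (c₂ + 2 * c₃ * S t₁) * Real.exp (-Φ t₁) * x t₁ * x' t₁
        + (2 / (μ + 1)) * P t₁ ^ (-(μ + 1) / 2) * x t₁ ^ (μ + 1) + c₃ * (x t₁) ^ 2
      = P t₂ * Real.exp (-(2 * Φ t₂)) * (x' t₂) ^ 2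
        - (c₂ + 2 * c₃ * S t₂) * Real.exp (-Φ t₂) * x t₂ * x' t₂
        + (2 / (μ + 1)) * P t₂ ^ (-(μ + 1) / 2) * x t₂ ^ (μ + 1) + c₃ * (x t₂) ^ 2 :=
  damped_nonlinear_QFI_general μ hμ c₁ c₂ c₃ φ Φ hΦ S hS P hP a b hPpos ω hω x x' x'' hx hx' hxpos
    heom
end
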